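/- Let D = (D_A, D_B, D_C) be a partite 3-uniform hypergraph degree sequence with the degrees in D_A listed in non-increasing order, let α be the average of the degrees in D_A, let k = ⌈α⌉, and let m satisfy m·k + (|D_A| − m)·(k−1) = α·|D_A|. Let D_A′ be the sequence consisting of m copies of k followed by |D_A| − m copies of k−1. Then every realization H of D can be transformed by a finite series of hinge-flip operations (each acting on the A-coordinate of a hyperedge) into a realization of the third almost-regular degree sequence D′ = (D_A′, D_B, D_C). -/

import Mathlib

open Finset

variable {B C : Type*} [Fintype B] [Fintype C] [DecidableEq B] [DecidableEq C]

/-- Degree of a vertex `a` of the first class in a partite 3-uniform hypergraph. -/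
def hDegA {n₁ : ℕ} (E : Finset (Fin n₁ × B × C)) (a : Fin n₁) : ℕ :=
  (E.filter fun e => e.1 = a).card

/-- Degree of a vertex `b ∈ B`. -/
def hDegB {n₁ : ℕ} (E : Finset (Fin n₁ × B × C)) (b : B) : ℕ :=
  (E.filter fun e => e.2.1 = b).card

/-- Degree of a vertex `c ∈ C`. -/
def hDegC {n₁ : ℕ} (E : Finset (Fin n₁ × B × C)) (c : C) : ℕ :=
  (E.filter fun e => e.2.2 = c).card

/-- A hinge-flip operation acting on the `A`-coordinate of a hyperedge: the hyperedge
`(a,b,c)` is removed and the hyperedge `(a',b,c)`, not previously present, is added. -/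
def IsHingeFlipA {n₁ : ℕ} (E E' : Finset (Fin n₁ × B × C)) : Prop :=
  ∃ a a' b c, (a, b, c) ∈ E ∧ (a', b, c) ∉ E ∧
    E' = insert (a', b, c) (E.erase (a, b, c))

/-!
A hinge flip moving a hyperedge from a vertex `a` with `dA' a < deg a` to a vertex `a'` with
`deg a' < dA' a'` preserves every `B`- and `C`-degree and the number of hyperedges, and lowers the
total surplus `∑ i, (deg i - dA' i)` by one. Such a flip is available as long as the target is not
reached: equal totals give both a surplus and a deficit vertex, and since `dA'` takes only the
values `k` and `k - 1`, the surplus vertex then has strictly larger degree than the deficit vertex,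
so one of its hyperedges `(a, b, c)` has `(a', b, c)` missing. The defining equation of `m` says
that `dA` and `dA'` have the same total.
-/

theorem Finset.card_filter_insert_erase_add {α : Type*} [DecidableEq α] (p : α → Prop)
    [DecidablePred p] {s : Finset α} {x y : α} (hx : x ∈ s) (hy : y ∉ s) :
    #((insert y (s.erase x)).filter p) + (if p x then 1 else 0)
      = #(s.filter p) + (if p y then 1 else 0) := by
  rw [card_filter, card_filter, sum_insert fun h => hy (mem_of_mem_erase h), add_assoc,
    sum_erase_add _ _ hx, add_comm]

section HingeFlip

variable {n : ℕ} {E E' : Finset (Fin n × B × C)}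

omit [Fintype B] [Fintype C] [DecidableEq B] [DecidableEq C] in
theorem sum_hDegA (E : Finset (Fin n × B × C)) : ∑ i, hDegA E i = #E :=
  (card_eq_sum_card_fiberwise fun e _ => mem_univ e.1).symm

omit [Fintype B] [Fintype C] [DecidableEq B] [DecidableEq C] in
theorem exists_mem_notMem_of_hDegA_lt {a a' : Fin n} (h : hDegA E a' < hDegA E a) :
    ∃ b c, (a, b, c) ∈ E ∧ (a', b, c) ∉ E := by
  by_contra! hcon
  refine h.not_ge (card_le_card_of_injOn (fun e => (a', e.2)) ?_ ?_)
  · rintro ⟨x, b, c⟩ he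
    simp only [coe_filter, Set.mem_ofPred_eq] at he ⊢
    exact ⟨hcon b c (he.2 ▸ he.1), trivial⟩
  · rintro ⟨x₁, p₁⟩ h₁ ⟨x₂, p₂⟩ h₂ heq
    simp_all

omit [Fintype B] [Fintype C] in
theorem IsHingeFlipA.card_eq (h : IsHingeFlipA E E') : #E' = #E := by
  obtain ⟨a, a', b, c, hmem, hnot, rfl⟩ := h
  simpa using card_filter_insert_erase_add (fun _ => True) hmem hnot

omit [Fintype B] [Fintype C] in
theorem IsHingeFlipA.hDegB_eq (h : IsHingeFlipA E E') : hDegB E' = hDegB E := by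
  obtain ⟨a, a', b, c, hmem, hnot, rfl⟩ := h
  funext b₀
  simpa [hDegB] using card_filter_insert_erase_add (fun e => e.2.1 = b₀) hmem hnot

omit [Fintype B] [Fintype C] in
theorem IsHingeFlipA.hDegC_eq (h : IsHingeFlipA E E') : hDegC E' = hDegC E := by
  obtain ⟨a, a', b, c, hmem, hnot, rfl⟩ := h
  funext c₀
  simpa [hDegC] using card_filter_insert_erase_add (fun e => e.2.2 = c₀) hmem hnot

omit [Fintype B] [Fintype C] in
theorem hDegA_insert_erase_add {a a' : Fin n} {b : B} {c : C} (hmem : (a, b, c) ∈ E)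
    (hnot : (a', b, c) ∉ E) (i : Fin n) :
    hDegA (insert (a', b, c) (E.erase (a, b, c))) i + (if i = a then 1 else 0)
      = hDegA E i + (if i = a' then 1 else 0) := by
  simpa [hDegA, eq_comm] using card_filter_insert_erase_add (fun e => e.1 = i) hmem hnot

omit [Fintype B] [Fintype C] in
theorem Relation.ReflTransGen.hDegB_eq (h : Relation.ReflTransGen IsHingeFlipA E E') :
    hDegB E' = hDegB E := by
  induction h with
  | refl => rfl
  | tail _ hflip ih => exact hflip.hDegB_eq.trans ih

omit [Fintype B] [Fintype C] in
theorem Relation.ReflTransGen.hDegC_eq (h : Relation.ReflTransGen IsHingeFlipA E E') :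
    hDegC E' = hDegC E := by
  induction h with
  | refl => rfl
  | tail _ hflip ih => exact hflip.hDegC_eq.trans ih

omit [Fintype B] [Fintype C] in
theorem exists_reflTransGen_hDegA_eq (d : Fin n → ℕ) (hd : ∀ i j, d j ≤ d i + 1)
    (E : Finset (Fin n × B × C)) (hE : #E = ∑ i, d i) :
    ∃ E', Relation.ReflTransGen IsHingeFlipA E E' ∧ ∀ i, hDegA E' i = d i := by
  induction hP : ∑ i, (hDegA E i - d i) using Nat.strong_induction_on generalizing E with
  | _ P ih =>
  have hsum : ∑ i, hDegA E i = ∑ i, d i := (sum_hDegA E).trans hE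
  by_cases hdone : ∀ i, hDegA E i ≤ d i
  · exact ⟨E, .refl, fun i => (sum_eq_sum_iff_of_le fun i _ => hdone i).1 hsum i (mem_univ i)⟩
  push Not at hdone
  obtain ⟨a, ha⟩ := hdone
  obtain ⟨a', -, ha'⟩ : ∃ a' ∈ univ, hDegA E a' < d a' := by
    by_contra! hdef
    have := (sum_eq_sum_iff_of_le hdef).1 hsum.symm a (mem_univ a)
    omega
  have hne : a ≠ a' := by rintro rfl; omega
  have hdeg_lt : hDegA E a' < hDegA E a := by have := hd a a'; omega
  obtain ⟨b, c, hmem, hnot⟩ := exists_mem_notMem_of_hDegA_lt hdeg_lt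
  have hflip : IsHingeFlipA E (insert (a', b, c) (E.erase (a, b, c))) :=
    ⟨a, a', b, c, hmem, hnot, rfl⟩
  have hdeg := hDegA_insert_erase_add hmem hnot
  have hlt : ∑ i, (hDegA (insert (a', b, c) (E.erase (a, b, c))) i - d i) < P := by
    refine hP ▸ sum_lt_sum (fun i _ => ?_) ⟨a, mem_univ a, ?_⟩
    · have := hdeg i
      by_cases hia : i = a
      · subst hia; simp [hne] at this; omega
      by_cases hia' : i = a'
      · subst hia'; simp [hia] at this; omega
      · simp [hia, hia'] at this; omega
    · have := hdeg a
      simp [hne] at this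
      omega
  obtain ⟨E'', hreach, hE''⟩ := ih _ hlt _ (hflip.card_eq.trans hE) rfl
  exact ⟨E'', .head hflip hreach, hE''⟩

end HingeFlip

theorem Fin.sum_ite_val_lt {n m : ℕ} (a b : ℕ) (hm : m ≤ n) :
    ∑ i : Fin n, (if (i : ℕ) < m then a else b) = m * a + (n - m) * b := by
  obtain ⟨l, rfl⟩ := Nat.exists_eq_add_of_le hm
  rw [Fin.sum_univ_eq_sum_range (fun i => if i < m then a else b), sum_range_add]
  simp [sum_ite_of_true, mul_comm]

theorem eq_mul_add_sub_mul_sub_one_of_cast_eq {s m n k : ℕ} (hm : m ≤ n)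
    (h : (s : ℚ) = m * k + (n - m) * (k - 1)) : s = m * k + (n - m) * (k - 1) := by
  rcases Nat.eq_zero_or_pos k with rfl | hk
  -- the truncation `0 - 1 = 0` in `ℕ` is harmless: here `h` forces `s = 0`
  · have : (m : ℚ) ≤ n := by exact_mod_cast hm
    have : (s : ℚ) ≤ 0 := by simp at h; linarith
    simpa using this
  · have hcast : ((m * k + (n - m) * (k - 1) : ℕ) : ℚ) = m * k + (n - m) * (k - 1) := by
      push_cast [Nat.cast_sub hm, Nat.cast_sub hk]; ring
    exact_mod_cast h.trans hcast.symm

theorem hingeflip_to_third_almost_regular_general {n₁ : ℕ}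
    (dA : Fin n₁ → ℕ) (dB : B → ℕ) (dC : C → ℕ)
    (α : ℚ) (hα : α = (∑ i, (dA i : ℚ)) / n₁)
    (k : ℕ)
    (m : ℕ) (hm : m ≤ n₁)
    (hmk : (m : ℚ) * k + ((n₁ : ℚ) - m) * ((k : ℚ) - 1) = α * n₁)
    (dA' : Fin n₁ → ℕ) (hdA' : dA' = fun i : Fin n₁ => if (i : ℕ) < m then k else k - 1)
    (H : Finset (Fin n₁ × B × C))
    (hHA : ∀ a, hDegA H a = dA a) (hHB : ∀ b, hDegB H b = dB b)
    (hHC : ∀ c, hDegC H c = dC c) :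
    ∃ H' : Finset (Fin n₁ × B × C),
      Relation.ReflTransGen IsHingeFlipA H H' ∧
      (∀ a, hDegA H' a = dA' a) ∧ (∀ b, hDegB H' b = dB b) ∧
      (∀ c, hDegC H' c = dC c) := by
  subst hdA'
  have hsum : ∑ i, (dA i : ℚ) = α * n₁ := by
    rcases eq_or_ne n₁ 0 with rfl | hn
    · simp
    · rw [hα]; field_simp
  have hcard : #H = ∑ i : Fin n₁, if (i : ℕ) < m then k else k - 1 := by
    rw [Fin.sum_ite_val_lt _ _ hm, ← sum_hDegA]
    simp only [hHA]
    exact eq_mul_add_sub_mul_sub_one_of_cast_eq hm (by push_cast; rw [hsum, hmk])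
  obtain ⟨H', hreach, hA'⟩ :=
    exists_reflTransGen_hDegA_eq _ (fun i j => by split_ifs <;> omega) H hcard
  exact ⟨H', hreach, hA', fun b => by rw [hreach.hDegB_eq, hHB],
    fun c => by rw [hreach.hDegC_eq, hHC]⟩

/-- with `D_A` non-increasing, `α` the average of `D_A`, `k = ⌈α⌉` and
`m` with `m·k + (n₁−m)·(k−1) = α·n₁`, every realization `H` of `D = (D_A, D_B, D_C)`
can be transformed by a finite series of `A`-coordinate hinge flips into a realization
of the third almost-regular degree sequence `D′ = (D_A′, D_B, D_C)`, where `D_A′`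
consists of `m` copies of `k` followed by `n₁ − m` copies of `k−1`. -/
theorem hingeflip_to_third_almost_regular {n₁ : ℕ}
    (dA : Fin n₁ → ℕ) (dB : B → ℕ) (dC : C → ℕ)
    (hmono : Antitone dA)
    (α : ℚ) (hα : α = (∑ i, (dA i : ℚ)) / n₁)
    (k : ℕ) (hk : k = ⌈α⌉₊)
    (m : ℕ) (hm : m ≤ n₁)
    (hmk : (m : ℚ) * k + ((n₁ : ℚ) - m) * ((k : ℚ) - 1) = α * n₁)
    (dA' : Fin n₁ → ℕ) (hdA' : dA' = fun i : Fin n₁ => if (i : ℕ) < m then k else k - 1)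
    (H : Finset (Fin n₁ × B × C))
    (hHA : ∀ a, hDegA H a = dA a) (hHB : ∀ b, hDegB H b = dB b)
    (hHC : ∀ c, hDegC H c = dC c) :
    ∃ H' : Finset (Fin n₁ × B × C),
      Relation.ReflTransGen IsHingeFlipA H H' ∧
      (∀ a, hDegA H' a = dA' a) ∧ (∀ b, hDegB H' b = dB b) ∧
      (∀ c, hDegC H' c = dC c) :=
  hingeflip_to_third_almost_regular_general dA dB dC α hα k m hm hmk dA' hdA' H hHA hHB hHC
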